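/- arXiv:1609.06617 — 2 statements merged into one kernel-verified Lean document; each statement's English description precedes it below -/
import Mathlib

section
/- Let 0 < ε < M' and m ≥ 1 be an integer, and set c_k = ε + k(M'−ε)/m for k = 0,…,m. Let λ : [ε,M'] → ℝ be differentiable with |λ'(t)| ≤ L on [ε,M'], and let g : [ε,M'] → ℝ be nondecreasing. Then sup_{t ∈ [ε,M']} (λ(t) − g(t))^2 ≤ 4 max_{0 ≤ k ≤ m} (λ(c_k) − g(c_k))^2 + 6 L^2 (M'−ε)^2 / m^2. -/
/-! Cover `[ε, M']` by the `m` cells `[c_j, c_{j+1}]` of the grid. On a cell, monotonicity of `g`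
squeezes `g t` between `g c_j` and `g c_{j+1}`, while `λ` moves by at most `δ = L (M' - ε) / m`
across the cell by the mean value inequality. Hence `|λ t - g t| ≤ δ + D`, where `D²` is the
largest squared grid discrepancy, and `(δ + D)² ≤ 2 δ² + 2 D²`. -/

open Set

theorem exists_nat_le_le_succ_of_le {x : ℝ} {m : ℕ} (hm : 1 ≤ m) (hx₀ : 0 ≤ x) (hxm : x ≤ m) :
    ∃ j < m, (j : ℝ) ≤ x ∧ x ≤ j + 1 := by
  rcases lt_or_ge ⌊x⌋₊ m with hfl | hfl
  · exact ⟨⌊x⌋₊, hfl, Nat.floor_le hx₀, (Nat.lt_floor_add_one x).le⟩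
  · refine ⟨m - 1, by omega, ?_, ?_⟩
    · have : ((m - 1 : ℕ) : ℝ) ≤ ⌊x⌋₊ := by exact_mod_cast (by omega : m - 1 ≤ ⌊x⌋₊)
      linarith [Nat.floor_le hx₀]
    · rw [Nat.cast_sub hm, Nat.cast_one, sub_add_cancel]
      exact hxm

noncomputable def gridPoint (a b : ℝ) (m k : ℕ) : ℝ := a + k * (b - a) / m

section gridPoint

variable {a b t : ℝ} {m k : ℕ}

theorem gridPoint_succ_sub (a b : ℝ) (m k : ℕ) :
    gridPoint a b m (k + 1) - gridPoint a b m k = (b - a) / m := by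
  simp only [gridPoint]; push_cast; ring

theorem gridPoint_mem_Icc (hab : a ≤ b) (hkm : k ≤ m) : gridPoint a b m k ∈ Icc a b := by
  rcases Nat.eq_zero_or_pos m with rfl | hm
  · simp [gridPoint, hab]
  have hm' : (0 : ℝ) < m := by exact_mod_cast hm
  have hk : (k : ℝ) ≤ m := by exact_mod_cast hkm
  have hstep : k * (b - a) / m ≤ b - a := by
    rw [div_le_iff₀ hm']; nlinarith
  exact ⟨le_add_of_nonneg_right (by positivity), by simp only [gridPoint]; linarith⟩

theorem exists_gridPoint_le_le_succ (hm : 1 ≤ m) (ht : t ∈ Icc a b) :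
    ∃ j < m, gridPoint a b m j ≤ t ∧ t ≤ gridPoint a b m (j + 1) := by
  rcases ht.1.trans ht.2 |>.eq_or_lt with rfl | hab
  · exact ⟨0, hm, by simp [gridPoint, ht.1.antisymm ht.2], by simp [gridPoint, ht.1.antisymm ht.2]⟩
  have hm' : (0 : ℝ) < m := by exact_mod_cast hm
  have hh : 0 < (b - a) / m := div_pos (sub_pos.2 hab) hm'
  have hx₀ : 0 ≤ (t - a) / ((b - a) / m) := div_nonneg (sub_nonneg.2 ht.1) hh.le
  have hxm : (t - a) / ((b - a) / m) ≤ m := by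
    rw [div_le_iff₀ hh, mul_div_cancel₀ _ hm'.ne']; linarith [ht.2]
  obtain ⟨j, hj, hjx, hxj⟩ := exists_nat_le_le_succ_of_le hm hx₀ hxm
  refine ⟨j, hj, ?_, ?_⟩
  · rw [le_div_iff₀ hh] at hjx
    simp only [gridPoint, mul_div_assoc]; linarith
  · rw [div_le_iff₀ hh] at hxj
    simp only [gridPoint, mul_div_assoc]; push_cast; linarith

end gridPoint

theorem abs_sub_le_of_monotoneOn_of_le_of_le {s : Set ℝ} {f g : ℝ → ℝ} {a b t δ D : ℝ}
    (hg : MonotoneOn g s) (ha : a ∈ s) (hb : b ∈ s) (ht : t ∈ s) (hat : a ≤ t) (htb : t ≤ b)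
    (hfa : |f t - f a| ≤ δ) (hfb : |f b - f t| ≤ δ)
    (hDa : |f a - g a| ≤ D) (hDb : |f b - g b| ≤ D) :
    |f t - g t| ≤ δ + D := by
  have hga := hg ha ht hat
  have hgb := hg ht hb htb
  rw [abs_le] at *
  constructor <;> linarith

theorem grid_sup_bound_general (ε M' L : ℝ)
    (m : ℕ) (hm : 1 ≤ m) (lam lam' g : ℝ → ℝ)
    (hderiv : ∀ t ∈ Set.Icc ε M', HasDerivWithinAt lam (lam' t) (Set.Icc ε M') t)
    (hL : ∀ t ∈ Set.Icc ε M', |lam' t| ≤ L)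
    (hg : MonotoneOn g (Set.Icc ε M')) :
    ∀ t ∈ Set.Icc ε M',
      (lam t - g t) ^ 2 ≤
        4 * (⨆ k : Fin (m + 1),
              (lam (ε + (k : ℕ) * (M' - ε) / m) - g (ε + (k : ℕ) * (M' - ε) / m)) ^ 2)
          + 6 * L ^ 2 * (M' - ε) ^ 2 / (m : ℝ) ^ 2 := by
  intro t ht
  set S := ⨆ k : Fin (m + 1), (lam (gridPoint ε M' m k) - g (gridPoint ε M' m k)) ^ 2
  change (lam t - g t) ^ 2 ≤ 4 * S + 6 * L ^ 2 * (M' - ε) ^ 2 / (m : ℝ) ^ 2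
  have hS : ∀ k ≤ m, (lam (gridPoint ε M' m k) - g (gridPoint ε M' m k)) ^ 2 ≤ S := fun k hk =>
    le_ciSup (f := fun k : Fin (m + 1) => (lam (gridPoint ε M' m k) - g (gridPoint ε M' m k)) ^ 2)
      (Finite.bddAbove_range _) ⟨k, Nat.lt_succ_of_le hk⟩
  have hS₀ : 0 ≤ S := (sq_nonneg _).trans (hS 0 (Nat.zero_le m))
  have hL₀ : 0 ≤ L := (abs_nonneg _).trans (hL t ht)
  have hεM : ε ≤ M' := ht.1.trans ht.2
  obtain ⟨j, hj, hjt, htj⟩ := exists_gridPoint_le_le_succ hm ht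
  have hstep := gridPoint_succ_sub ε M' m j
  have hcj := gridPoint_mem_Icc hεM hj.le
  have hcj₁ := gridPoint_mem_Icc hεM hj
  set δ := L * ((M' - ε) / m) with hδ
  have hnear : ∀ x ∈ Icc ε M', ∀ y ∈ Icc ε M', 0 ≤ y - x → y - x ≤ (M' - ε) / m →
      |lam y - lam x| ≤ δ := fun x hx y hy hxy₀ hxy => by
    refine ((convex_Icc ε M').norm_image_sub_le_of_norm_hasDerivWithin_le hderiv hL hx hy).trans ?_
    rw [Real.norm_eq_abs, abs_of_nonneg hxy₀]
    exact mul_le_mul_of_nonneg_left hxy hL₀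
  have hdiff : |lam t - g t| ≤ δ + √S :=
    abs_sub_le_of_monotoneOn_of_le_of_le hg hcj hcj₁ ht hjt htj
      (hnear _ hcj t ht (by linarith) (by linarith)) (hnear t ht _ hcj₁ (by linarith) (by linarith))
      (Real.abs_le_sqrt (hS j hj.le)) (Real.abs_le_sqrt (hS (j + 1) hj))
  have hsq : (lam t - g t) ^ 2 ≤ (δ + √S) ^ 2 :=
    sq_le_sq' (neg_le_of_abs_le hdiff) (le_of_abs_le hdiff)
  have hδ_sq : 6 * L ^ 2 * (M' - ε) ^ 2 / (m : ℝ) ^ 2 = 6 * δ ^ 2 := by rw [hδ]; ring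
  rw [hδ_sq]
  nlinarith [Real.sq_sqrt hS₀, sq_nonneg (δ - √S)]

theorem grid_sup_bound (ε M' L : ℝ) (hε : 0 < ε) (hεM : ε < M')
    (m : ℕ) (hm : 1 ≤ m) (lam lam' g : ℝ → ℝ)
    (hderiv : ∀ t ∈ Set.Icc ε M', HasDerivWithinAt lam (lam' t) (Set.Icc ε M') t)
    (hL : ∀ t ∈ Set.Icc ε M', |lam' t| ≤ L)
    (hg : MonotoneOn g (Set.Icc ε M')) :
    ∀ t ∈ Set.Icc ε M',
      (lam t - g t) ^ 2 ≤
        4 * (⨆ k : Fin (m + 1),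
              (lam (ε + (k : ℕ) * (M' - ε) / m) - g (ε + (k : ℕ) * (M' - ε) / m)) ^ 2)
          + 6 * L ^ 2 * (M' - ε) ^ 2 / (m : ℝ) ^ 2 :=
  grid_sup_bound_general ε M' L m hm lam lam' g hderiv hL hg
end

section
/- Let Λ : [0,T] → ℝ be continuous, let Λ̃ be the greatest convex minorant of Λ on [0,T], let λ̃(x) denote the left derivative of Λ̃ at x ∈ (0,T], and for a ∈ ℝ let U(a) be the largest element of argmin_{x ∈ [0,T]} (Λ(x) − a x). Then for all x ∈ (0,T] and a ∈ ℝ: λ̃(x) ≤ a if and only if U(a) ≥ x. -/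
/-!
The line `z ↦ Λ(U a) + a (z - U a)` is a convex minorant of `Λ` touching it at `U a`, so the
greatest convex minorant `G` agrees with it at `U a` and lies above it elsewhere.
If `x ≤ U a`, convexity bounds the left slopes of `G` at `x` by the slopes towards `U a`,
which are at most `a`. If `U a < x`, then `Λ(z) - a z` exceeds its minimum by some `δ > 0`
on `[c, T]` for any `c ∈ (U a, x)` (continuity and compactness), so tilting the line upward
past `c` still gives a convex minorant; hence `G x` lies strictly above the line and the
secant slope of `G` from `U a` to `x`, a lower bound for the left derivative, exceeds `a`.
-/

open Set Filter Topology

noncomputable def greatestConvexMinorant {E : Type*} [AddCommGroup E] [Module ℝ E]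
    (s : Set E) (f : E → ℝ) (x : E) : ℝ :=
  sSup {y : ℝ | ∃ g : E → ℝ, ConvexOn ℝ s g ∧ (∀ z ∈ s, g z ≤ f z) ∧ y = g x}

section GreatestConvexMinorant

variable {E : Type*} [AddCommGroup E] [Module ℝ E] {s : Set E} {f g : E → ℝ}

lemma ConvexOn.le_greatestConvexMinorant (hg : ConvexOn ℝ s g) (hgf : ∀ z ∈ s, g z ≤ f z)
    {x : E} (hx : x ∈ s) : g x ≤ greatestConvexMinorant s f x :=
  le_csSup ⟨f x, by rintro _ ⟨g', -, hg'f, rfl⟩; exact hg'f x hx⟩ ⟨g, hg, hgf, rfl⟩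

lemma greatestConvexMinorant_le (hg : ConvexOn ℝ s g) (hgf : ∀ z ∈ s, g z ≤ f z)
    {x : E} (hx : x ∈ s) : greatestConvexMinorant s f x ≤ f x :=
  csSup_le ⟨g x, g, hg, hgf, rfl⟩ (by rintro _ ⟨g', -, hg'f, rfl⟩; exact hg'f x hx)

lemma convexOn_greatestConvexMinorant (hg : ConvexOn ℝ s g) (hgf : ∀ z ∈ s, g z ≤ f z) :
    ConvexOn ℝ s (greatestConvexMinorant s f) := by
  refine ⟨hg.1, fun x hx y hy a b ha hb hab => csSup_le ⟨_, g, hg, hgf, rfl⟩ ?_⟩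
  rintro _ ⟨g', hg', hg'f, rfl⟩
  calc g' (a • x + b • y) ≤ a • g' x + b • g' y := hg'.2 hx hy ha hb hab
    _ ≤ a • greatestConvexMinorant s f x + b • greatestConvexMinorant s f y := by
      gcongr
      · exact hg'.le_greatestConvexMinorant hg'f hx
      · exact hg'.le_greatestConvexMinorant hg'f hy

end GreatestConvexMinorant

lemma convexOn_const_add_mul {s : Set ℝ} (hs : Convex ℝ s) (m a : ℝ) :
    ConvexOn ℝ s (fun z => m + a * z) :=
  (convexOn_const m hs).add ((LinearMap.mul ℝ ℝ a).convexOn hs)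

lemma const_add_mul_lt_greatestConvexMinorant {f : ℝ → ℝ} {p c x T m a : ℝ}
    (hf : ContinuousOn f (Icc c T)) (hpc : p ≤ c) (hcx : c < x) (hxT : x ≤ T)
    (hle : ∀ z ∈ Icc p T, m + a * z ≤ f z) (hlt : ∀ z ∈ Icc c T, m + a * z < f z) :
    m + a * x < greatestConvexMinorant (Icc p T) f x := by
  obtain ⟨w, hw, hwmin⟩ := isCompact_Icc.exists_isMinOn (nonempty_Icc.2 (hcx.le.trans hxT))
    (hf.sub (by fun_prop : Continuous fun z => m + a * z).continuousOn)
  set δ := f w - (m + a * w)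
  have hδ : 0 < δ := sub_pos.2 (hlt w hw)
  set ε := δ / (T - c)
  have hε : 0 < ε := div_pos hδ (by linarith)
  -- tilting the line by slope `ε` about `c` lowers it left of `c`
  -- and raises it by at most `δ` on `[c, T]`
  have hg := (convexOn_const_add_mul (convex_Icc p T) m a).sup
    (convexOn_const_add_mul (convex_Icc p T) (m - ε * c) (a + ε))
  have hgf : ∀ z ∈ Icc p T, max (m + a * z) (m - ε * c + (a + ε) * z) ≤ f z := by
    intro z hz
    refine max_le (hle z hz) ?_
    rcases le_total z c with hzc | hcz
    · nlinarith [hle z hz]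
    · have hεz : ε * (z - c) ≤ δ := by
        calc ε * (z - c) ≤ ε * (T - c) := by gcongr; exact hz.2
          _ = δ := div_mul_cancel₀ δ (by linarith)
      have hmin : δ ≤ f z - (m + a * z) := isMinOn_iff.mp hwmin z ⟨hcz, hz.2⟩
      linarith
  calc m + a * x < m - ε * c + (a + ε) * x := by nlinarith
    _ ≤ max (m + a * x) (m - ε * c + (a + ε) * x) := le_max_right _ _
    _ ≤ greatestConvexMinorant (Icc p T) f x :=
      hg.le_greatestConvexMinorant hgf ⟨hpc.trans hcx.le, hxT⟩

lemma apply_lt_of_isGreatest_argmin {α β : Type*} [LinearOrder α] [PartialOrder β]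
    {s : Set α} (φ : α → β) {u : α} (hu : IsGreatest {x | x ∈ s ∧ ∀ z ∈ s, φ x ≤ φ z} u)
    {z : α} (hz : z ∈ s) (huz : u < z) : φ u < φ z :=
  lt_of_le_of_ne (hu.1.2 z hz) fun h => huz.not_ge (hu.2 ⟨hz, fun y hy => h ▸ hu.1.2 y hy⟩)

section SupportingLine

variable {s : Set ℝ} {G : ℝ → ℝ} {m a u x d : ℝ}

lemma ConvexOn.le_of_hasDerivWithinAt_Iio_of_supportingLine (hG : ConvexOn ℝ s G)
    (hLG : ∀ z ∈ s, m + a * z ≤ G z) (hGu : G u = m + a * u) (hu : u ∈ s) (hx : x ∈ s)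
    (hxu : x ≤ u) {p : ℝ} (hp : p ∈ s) (hpx : p < x) (hd : HasDerivWithinAt G d (Iio x) x) :
    d ≤ a := by
  refine le_of_tendsto ((hasDerivWithinAt_iff_tendsto_slope' self_notMem_Iio).mp hd) ?_
  filter_upwards [Ioo_mem_nhdsLT hpx] with z hz
  have hz_mem : z ∈ s := hG.1.ordConnected.out hp hx (Ioo_subset_Icc_self hz)
  calc slope G x z = slope G z x := slope_comm _ _ _
    _ ≤ slope G z u := hG.slope_mono hz_mem ⟨hx, hz.2.ne'⟩ ⟨hu, (hz.2.trans_le hxu).ne'⟩ hxu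
    _ ≤ a := by
      rw [slope_def_field, div_le_iff₀ (by linarith [hz.2]), hGu]
      linarith [hLG z hz_mem]

lemma ConvexOn.lt_of_hasDerivWithinAt_Iio_of_line_lt (hG : ConvexOn ℝ s G)
    (hGu : G u = m + a * u) (hu : u ∈ s) (hx : x ∈ s) (hux : u < x) (hgap : m + a * x < G x)
    (hd : HasDerivWithinAt G d (Iio x) x) : a < d := by
  have hslope : a < slope G u x := by
    rw [slope_def_field, lt_div_iff₀ (sub_pos.2 hux), hGu]
    linarith
  exact hslope.trans_le (hG.slope_le_of_hasDerivWithinAt_Iio hu hx hux hd)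

end SupportingLine

theorem switching_relation_general (T : ℝ) (Λ : ℝ → ℝ)
    (hΛ : ContinuousOn Λ (Set.Icc 0 T))
    (G : ℝ → ℝ)
    (hG : ∀ x, G x = sSup {y : ℝ | ∃ g : ℝ → ℝ,
      ConvexOn ℝ (Set.Icc 0 T) g ∧ (∀ z ∈ Set.Icc (0 : ℝ) T, g z ≤ Λ z) ∧ y = g x})
    (lt : ℝ → ℝ)
    (hlt : ∀ x ∈ Set.Ioc (0 : ℝ) T, HasDerivWithinAt G (lt x) (Set.Iio x) x)
    (U : ℝ → ℝ)
    (hU : ∀ a : ℝ, IsGreatest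
      {x : ℝ | x ∈ Set.Icc (0 : ℝ) T ∧
        ∀ z ∈ Set.Icc (0 : ℝ) T, Λ x - a * x ≤ Λ z - a * z} (U a)) :
    ∀ x ∈ Set.Ioc (0 : ℝ) T, ∀ a : ℝ, (lt x ≤ a ↔ x ≤ U a) := by
  obtain rfl : G = greatestConvexMinorant (Icc 0 T) Λ := funext hG
  intro x hx a
  have hxI : x ∈ Icc 0 T := Ioc_subset_Icc_self hx
  obtain ⟨hu, humin⟩ := (hU a).1
  set u := U a
  set m := Λ u - a * u
  have hL := convexOn_const_add_mul (convex_Icc 0 T) m a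
  have hLΛ : ∀ z ∈ Icc 0 T, m + a * z ≤ Λ z := fun z hz => by linarith [humin z hz]
  have hGconv := convexOn_greatestConvexMinorant hL hLΛ
  have hLG : ∀ z ∈ Icc 0 T, m + a * z ≤ greatestConvexMinorant (Icc 0 T) Λ z :=
    fun z hz => hL.le_greatestConvexMinorant hLΛ hz
  have hGu : greatestConvexMinorant (Icc 0 T) Λ u = m + a * u :=
    le_antisymm ((greatestConvexMinorant_le hL hLΛ hu).trans_eq (by ring)) (hLG u hu)
  refine ⟨fun hxa => ?_, fun hxu => hGconv.le_of_hasDerivWithinAt_Iio_of_supportingLine hLG hGu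
    hu hxI hxu (left_mem_Icc.2 (hx.1.le.trans hx.2)) hx.1 (hlt x hx)⟩
  by_contra! hux
  obtain ⟨c, huc, hcx⟩ := exists_between hux
  have hgap : m + a * x < greatestConvexMinorant (Icc 0 T) Λ x := by
    refine const_add_mul_lt_greatestConvexMinorant (hΛ.mono (Icc_subset_Icc_left
      (hu.1.trans huc.le))) (hu.1.trans huc.le) hcx hx.2 hLΛ fun z hz => ?_
    have hmin := apply_lt_of_isGreatest_argmin (fun x => Λ x - a * x) (hU a)
      ⟨hu.1.trans (huc.le.trans hz.1), hz.2⟩ (huc.trans_le hz.1)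
    linarith
  exact (hGconv.lt_of_hasDerivWithinAt_Iio_of_line_lt hGu hu hxI hux hgap (hlt x hx)).not_ge hxa

theorem switching_relation (T : ℝ) (hT : 0 < T) (Λ : ℝ → ℝ)
    (hΛ : ContinuousOn Λ (Set.Icc 0 T))
    (G : ℝ → ℝ)
    (hG : ∀ x, G x = sSup {y : ℝ | ∃ g : ℝ → ℝ,
      ConvexOn ℝ (Set.Icc 0 T) g ∧ (∀ z ∈ Set.Icc (0 : ℝ) T, g z ≤ Λ z) ∧ y = g x})
    (lt : ℝ → ℝ)
    (hlt : ∀ x ∈ Set.Ioc (0 : ℝ) T, HasDerivWithinAt G (lt x) (Set.Iio x) x)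
    (U : ℝ → ℝ)
    (hU : ∀ a : ℝ, IsGreatest
      {x : ℝ | x ∈ Set.Icc (0 : ℝ) T ∧
        ∀ z ∈ Set.Icc (0 : ℝ) T, Λ x - a * x ≤ Λ z - a * z} (U a)) :
    ∀ x ∈ Set.Ioc (0 : ℝ) T, ∀ a : ℝ, (lt x ≤ a ↔ x ≤ U a) :=
  switching_relation_general T Λ hΛ G hG lt hlt U hU
end
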